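/- Let a, b be rational integers with 2 ≤ a ≤ b−2 and (a,b) ≠ (2,4), and write b − a = 2L + l₀ with L a nonnegative integer and l₀ ∈ {0,1}. Then N_{K/ℚ}(α(v, a−1)) < N_{K/ℚ}(α(v+1, a−1)) holds (a) for all integers v with 0 ≤ v ≤ L−2 when l₀ = 0 and L ≥ 2, and (b) for all integers v with 0 ≤ v ≤ L−1 when l₀ = 1. -/

import Mathlib

open IntermediateField

noncomputable section

/-- The element `α(v,W) = −v + (b(av+W)+1)ρ − (av+W)ρ²` of `ℚ(ρ) ⊆ ℝ`, where `ρ` is the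
largest real root of `x³ − (a+b)x² + abx − 1`. -/
def alphaT (a b : ℤ) (ρ : ℝ) (v W : ℤ) : ℚ⟮ρ⟯ :=
  -((v : ℤ) : ℚ⟮ρ⟯) + ((b * (a * v + W) + 1 : ℤ) : ℚ⟮ρ⟯) * AdjoinSimple.gen ℚ ρ
    - ((a * v + W : ℤ) : ℚ⟮ρ⟯) * AdjoinSimple.gen ℚ ρ ^ 2

/-- The norm of `alphaT a b ρ v w` as an explicit integer polynomial. -/
def NInt (a b v w : ℤ) : ℤ :=
  1 - w^3 - 3*v*w - v^3 + 2*b*w - b*v*w^2 + b*v^2 + b^2*w^2 - a*w - a*v*w^2 - 2*a*v^2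
    - a*b*w^2 + a*b*v - a*b*v^2*w + a*b^2*v*w - a^2*v - a^2*b*v*w

theorem aux_norm (a b : ℤ) (ρ : ℝ)
    (hroot : ρ ^ 3 - ((a : ℝ) + (b : ℝ)) * ρ ^ 2 + (a : ℝ) * (b : ℝ) * ρ - 1 = 0)
    (hdeg : Module.finrank ℚ ℚ⟮ρ⟯ = 3) (v w : ℤ) :
    Algebra.norm ℚ (alphaT a b ρ v w) = ((NInt a b v w : ℤ) : ℚ) := by
  have hp : Polynomial.aeval ρ
      (Polynomial.X ^ 3 - Polynomial.C ((a : ℚ) + (b : ℚ)) * Polynomial.X ^ 2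
        + Polynomial.C ((a : ℚ) * (b : ℚ)) * Polynomial.X - 1) = 0 := by
    simp only [map_sub, map_add, map_mul, map_pow, map_one, Polynomial.aeval_X,
      Polynomial.aeval_C, map_intCast]
    push_cast
    linear_combination hroot
  have hint : IsIntegral ℚ ρ := by
    refine ⟨Polynomial.X ^ 3 - Polynomial.C ((a : ℚ) + (b : ℚ)) * Polynomial.X ^ 2
        + Polynomial.C ((a : ℚ) * (b : ℚ)) * Polynomial.X - 1, ?_, hp⟩
    monicity!
  set pb := IntermediateField.adjoin.powerBasis hint with hpb
  have hdim : pb.dim = 3 := by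
    have h1 := IntermediateField.adjoin.finrank hint
    rw [hdeg] at h1
    simpa [hpb, IntermediateField.adjoin.powerBasis_dim] using h1.symm
  set r : ℚ⟮ρ⟯ := AdjoinSimple.gen ℚ ρ with hrdef
  set b' : Module.Basis (Fin 3) ℚ ℚ⟮ρ⟯ := pb.basis.reindex (finCongr hdim) with hb'def
  have hb'' : ∀ i : Fin 3, b' i = r ^ (i : ℕ) := by
    intro i
    rw [hb'def, Module.Basis.reindex_apply, PowerBasis.coe_basis]
    simp [hpb, IntermediateField.adjoin.powerBasis_gen, hrdef]
  have hb0 : b' 0 = 1 := by rw [hb'' 0]; norm_num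
  have hb1 : b' 1 = r := by rw [hb'' 1]; norm_num
  have hb2 : b' 2 = r ^ 2 := by rw [hb'' 2]; norm_num
  have hrel : r ^ 3 = (((a + b : ℤ)) : ℚ⟮ρ⟯) * r ^ 2 - (((a * b : ℤ)) : ℚ⟮ρ⟯) * r + 1 := by
    apply (algebraMap ℚ⟮ρ⟯ ℝ).injective
    simp only [map_add, map_sub, map_mul, map_pow, map_one, map_intCast,
      hrdef, AdjoinSimple.algebraMap_gen]
    push_cast
    linear_combination hroot
  have hrepr : ∀ (c₀ c₁ c₂ : ℤ) (x : ℚ⟮ρ⟯),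
      x = (c₀ : ℚ⟮ρ⟯) + (c₁ : ℚ⟮ρ⟯) * r + (c₂ : ℚ⟮ρ⟯) * r ^ 2 →
      ∀ i : Fin 3, b'.repr x i = ![(c₀ : ℚ), (c₁ : ℚ), (c₂ : ℚ)] i := by
    intro c₀ c₁ c₂ x hx i
    have hx' : x = ((c₀ : ℤ) : ℚ) • b' 0 + ((c₁ : ℤ) : ℚ) • b' 1 + ((c₂ : ℤ) : ℚ) • b' 2 := by
      rw [hb0, hb1, hb2]
      simp only [Algebra.smul_def, map_intCast]
      rw [hx]
      ring
    rw [hx', map_add, map_add, map_smul, map_smul, map_smul, b'.repr_self, b'.repr_self,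
      b'.repr_self]
    fin_cases i <;>
      simp [Finsupp.single_apply, Fin.ext_iff]
  -- coefficients of alphaT
  set c₀ : ℤ := -v with hc₀
  set c₁ : ℤ := b * (a * v + w) + 1 with hc₁
  set c₂ : ℤ := -(a * v + w) with hc₂
  have hα : alphaT a b ρ v w = (c₀ : ℚ⟮ρ⟯) + (c₁ : ℚ⟮ρ⟯) * r + (c₂ : ℚ⟮ρ⟯) * r ^ 2 := by
    rw [alphaT, ← hrdef, hc₀, hc₁, hc₂]
    push_cast
    ring
  have h0 : alphaT a b ρ v w * b' 0 = (c₀ : ℚ⟮ρ⟯) + (c₁ : ℚ⟮ρ⟯) * r + (c₂ : ℚ⟮ρ⟯) * r ^ 2 := by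
    rw [hb0, hα]; norm_num
  have h1 : alphaT a b ρ v w * b' 1
      = ((c₂ : ℤ) : ℚ⟮ρ⟯) + ((c₀ - a * b * c₂ : ℤ) : ℚ⟮ρ⟯) * r
        + ((c₁ + (a + b) * c₂ : ℤ) : ℚ⟮ρ⟯) * r ^ 2 := by
    rw [hb1, hα]
    push_cast
    push_cast at hrel
    linear_combination ((c₂ : ℤ) : ℚ⟮ρ⟯) * hrel
  have h2 : alphaT a b ρ v w * b' 2
      = ((c₁ + (a + b) * c₂ : ℤ) : ℚ⟮ρ⟯)
        + ((-(a * b) * c₁ + (1 - a * b * (a + b)) * c₂ : ℤ) : ℚ⟮ρ⟯) * r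
        + ((c₀ + (a + b) * c₁ + ((a + b) ^ 2 - a * b) * c₂ : ℤ) : ℚ⟮ρ⟯) * r ^ 2 := by
    rw [hb2, hα]
    push_cast
    push_cast at hrel
    linear_combination (((c₁ : ℚ⟮ρ⟯) + ((a : ℚ⟮ρ⟯) + (b : ℚ⟮ρ⟯)) * (c₂ : ℚ⟮ρ⟯))
      + (c₂ : ℚ⟮ρ⟯) * r) * hrel
  have e00 := hrepr _ _ _ _ h0 0
  have e10 := hrepr _ _ _ _ h0 1
  have e20 := hrepr _ _ _ _ h0 2
  have e01 := hrepr _ _ _ _ h1 0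
  have e11 := hrepr _ _ _ _ h1 1
  have e21 := hrepr _ _ _ _ h1 2
  have e02 := hrepr _ _ _ _ h2 0
  have e12 := hrepr _ _ _ _ h2 1
  have e22 := hrepr _ _ _ _ h2 2
  rw [Algebra.norm_eq_matrix_det b', Matrix.det_fin_three]
  simp only [Algebra.leftMulMatrix_eq_repr_mul]
  rw [e00, e10, e20, e01, e11, e21, e02, e12, e22]
  simp only [Matrix.cons_val_zero, Matrix.cons_val_one, Matrix.head_cons,
    Matrix.cons_val_two, Matrix.tail_cons]
  rw [NInt, hc₀, hc₁, hc₂]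
  push_cast
  ring

theorem aux_ineq (a t v : ℤ) (ha : 2 ≤ a) (ht : 0 ≤ t) (hv : 0 ≤ v) :
    NInt a (a + 2 * v + 3 + t) v (a - 1) < NInt a (a + 2 * v + 3 + t) (v + 1) (a - 1) := by
  have ha0 : (0 : ℤ) ≤ a := by linarith
  have ha1 : (0 : ℤ) ≤ a - 1 := by linarith
  have hD : NInt a (a + 2 * v + 3 + t) (v + 1) (a - 1) - NInt a (a + 2 * v + 3 + t) v (a - 1)
      = (2 + 3 * v + v ^ 2 + 2 * t * v) + a * (5 * a - 3) + 2 * a ^ 2 * v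
        + a * t * (a ^ 2 + 3 * a - 2) + 2 * a * t * v * (a - 1) + a * t ^ 2 * (a - 1) := by
    simp only [NInt]; ring
  have t1 : (0 : ℤ) ≤ 2 + 3 * v + v ^ 2 + 2 * t * v := by
    have := mul_nonneg ht hv; nlinarith
  have t2 : (0 : ℤ) < a * (5 * a - 3) := by nlinarith
  have t3 : (0 : ℤ) ≤ 2 * a ^ 2 * v := by positivity
  have t4 : (0 : ℤ) ≤ a * t * (a ^ 2 + 3 * a - 2) := by
    apply mul_nonneg (mul_nonneg ha0 ht); nlinarith
  have t5 : (0 : ℤ) ≤ 2 * a * t * v * (a - 1) := by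
    apply mul_nonneg (mul_nonneg (mul_nonneg (by linarith) ht) hv) ha1
  have t6 : (0 : ℤ) ≤ a * t ^ 2 * (a - 1) := by positivity
  linarith

/-- Let `2 ≤ a ≤ b−2`, `(a,b) ≠ (2,4)`, and write `b − a = 2L + l₀` with
`L ≥ 0`, `l₀ ∈ {0,1}`. Then `N(α(v, a−1)) < N(α(v+1, a−1))` holds
(a) for all `0 ≤ v ≤ L−2` when `l₀ = 0` and `L ≥ 2`, and
(b) for all `0 ≤ v ≤ L−1` when `l₀ = 1`. -/
theorem stmt_18 (a b L l₀ : ℤ) (ha : 2 ≤ a) (hab : a ≤ b - 2)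
    (hexc : ¬ (a = 2 ∧ b = 4))
    (hL : 0 ≤ L) (hl₀ : l₀ = 0 ∨ l₀ = 1) (hbL : b - a = 2 * L + l₀)
    (ρ : ℝ) (hroot : ρ ^ 3 - ((a : ℝ) + (b : ℝ)) * ρ ^ 2 + (a : ℝ) * (b : ℝ) * ρ - 1 = 0)
    (hmax : ∀ x : ℝ, x ^ 3 - ((a : ℝ) + (b : ℝ)) * x ^ 2 + (a : ℝ) * (b : ℝ) * x - 1 = 0 → x ≤ ρ)
    (hdeg : Module.finrank ℚ ℚ⟮ρ⟯ = 3) :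
    (l₀ = 0 → 2 ≤ L → ∀ v : ℤ, 0 ≤ v → v ≤ L - 2 →
      Algebra.norm ℚ (alphaT a b ρ v (a - 1)) <
        Algebra.norm ℚ (alphaT a b ρ (v + 1) (a - 1))) ∧
    (l₀ = 1 → ∀ v : ℤ, 0 ≤ v → v ≤ L - 1 →
      Algebra.norm ℚ (alphaT a b ρ v (a - 1)) <
        Algebra.norm ℚ (alphaT a b ρ (v + 1) (a - 1))) := by
  have key : ∀ v : ℤ, 0 ≤ v → a + 2 * v + 3 ≤ b →
      Algebra.norm ℚ (alphaT a b ρ v (a - 1)) <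
        Algebra.norm ℚ (alphaT a b ρ (v + 1) (a - 1)) := by
    intro v hv hb
    rw [aux_norm a b ρ hroot hdeg v (a - 1), aux_norm a b ρ hroot hdeg (v + 1) (a - 1)]
    rw [Int.cast_lt]
    have ht : 0 ≤ b - a - 2 * v - 3 := by linarith
    have := aux_ineq a (b - a - 2 * v - 3) v ha ht hv
    have hb' : a + 2 * v + 3 + (b - a - 2 * v - 3) = b := by ring
    rwa [hb'] at this
  constructor
  · intro h0 hL2 v hv hvL
    exact key v hv (by omega)
  · intro h1 v hv hvL
    exact key v hv (by omega)
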